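/- arXiv:2511.13443 — 2 statements merged into one kernel-verified Lean document; each statement's English description precedes it below -/
import Mathlib

section
/- Let n ≥ 1, let A ∈ M_n(ℤ) be a positive integer matrix (no eigenvalue of A in ℚ̄ is 0 or a root of unity), and let k be an algebraically closed field of characteristic zero. Then the set of φ_A-periodic points in (k^*)^n, i.e., {u ∈ (k^*)^n : φ_A^{∘m}(u) = u for some m ≥ 1}, is Zariski dense in 𝔾_m^n: no nonzero Laurent polynomial over k vanishes on all φ_A-periodic points. -/
noncomputable section

/-- The group endomorphism `φ_A` of `𝔾_m^n(k) = (k^*)^n` attached to an integer matrix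
`A = (a_{ij})`: `(u_1, …, u_n) ↦ (∏_j u_j^{a_{1j}}, …, ∏_j u_j^{a_{nj}})`. -/
def phiA {k : Type*} [Field k] {n : ℕ} (A : Matrix (Fin n) (Fin n) ℤ) (u : Fin n → kˣ) :
    Fin n → kˣ :=
  fun i => ∏ j, u j ^ (A i j)

/-- An integer matrix is positive if no eigenvalue (root of its characteristic polynomial
in `ℚ̄ ⊆ ℂ`) is `0` or a root of unity. -/
def Matrix.IsPositiveZMatrix {n : ℕ} (A : Matrix (Fin n) (Fin n) ℤ) : Prop :=
  ∀ ν : ℂ, (Matrix.charpoly (A.map (fun x : ℤ => (x : ℂ)))).IsRoot ν →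
    ν ≠ 0 ∧ ∀ m : ℕ, 0 < m → ν ^ m ≠ 1

/-!
Let `u` be a torsion point whose coordinates are roots of unity of orders coprime to
`det A ≠ 0`, with common order `N`. Then `A` is invertible modulo `N`, so `A ^ m ≡ 1 [ZMOD N]`
for some `m ≥ 1`, whence `φ_A^m u = φ_{A^m} u = u`. The roots of unity of order coprime to
`det A` form an infinite set `S` (take the orders `|det A| * t + 1`), so the periodic points
contain the grid `S^n`, on which only the zero polynomial vanishes.
-/

lemma zpow_finset_sum {G ι : Type*} [CommGroup G] (x : G) (s : Finset ι) (f : ι → ℤ) :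
    x ^ (∑ i ∈ s, f i) = ∏ i ∈ s, x ^ f i := by
  induction s using Finset.cons_induction <;> simp_all [zpow_add]

open Matrix

section PhiA

variable {k : Type*} [Field k] {n : ℕ}

lemma phiA_mul (A B : Matrix (Fin n) (Fin n) ℤ) (u : Fin n → kˣ) :
    phiA (A * B) u = phiA A (phiA B u) := by
  funext i
  calc phiA (A * B) u i = ∏ l, ∏ j, u l ^ (A i j * B j l) := by
        simp only [phiA, mul_apply, zpow_finset_sum]
    _ = ∏ j, ∏ l, u l ^ (A i j * B j l) := Finset.prod_comm
    _ = ∏ j, (∏ l, u l ^ B j l) ^ A i j := by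
        simp only [← Finset.prod_zpow, ← _root_.zpow_mul, mul_comm]

lemma phiA_one (u : Fin n → kˣ) : phiA (1 : Matrix (Fin n) (Fin n) ℤ) u = u := by
  funext i
  simp [phiA, one_apply]

lemma iterate_phiA (A : Matrix (Fin n) (Fin n) ℤ) (m : ℕ) (u : Fin n → kˣ) :
    (phiA A)^[m] u = phiA (A ^ m) u := by
  induction m with
  | zero => simp [phiA_one]
  | succ m ih => rw [Function.iterate_succ_apply', ih, ← phiA_mul, ← pow_succ']

lemma phiA_eq_of_map_intCast_eq {N : ℕ} {u : Fin n → kˣ} (hu : ∀ j, u j ^ N = 1)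
    {A B : Matrix (Fin n) (Fin n) ℤ}
    (hAB : A.map ((↑) : ℤ → ZMod N) = B.map ((↑) : ℤ → ZMod N)) :
    phiA A u = phiA B u := by
  funext i
  refine Finset.prod_congr rfl fun j _ => zpow_eq_zpow_iff_modEq.mpr ?_
  have hmod : A i j ≡ B i j [ZMOD N] := (ZMod.intCast_eq_intCast_iff _ _ _).mp (congrFun₂ hAB i j)
  exact hmod.of_dvd (Int.natCast_dvd_natCast.mpr (orderOf_dvd_of_pow_eq_one (hu j)))

end PhiA

lemma Matrix.exists_pow_map_intCast_eq_one {ι : Type*} [Fintype ι] [DecidableEq ι]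
    {N : ℕ} [NeZero N] (A : Matrix ι ι ℤ) (hA : N.Coprime A.det.natAbs) :
    ∃ m, 0 < m ∧ (A ^ m).map ((↑) : ℤ → ZMod N) = 1 := by
  have hunit : IsUnit (A.map ((↑) : ℤ → ZMod N)) := by
    rw [isUnit_iff_isUnit_det, ← Int.cast_det, ZMod.coe_int_isUnit_iff_isCoprime]
    exact Int.isCoprime_iff_nat_coprime.mpr hA
  refine ⟨_, hunit.isOfFinOrder.orderOf_pos, ?_⟩
  change (Int.castRingHom (ZMod N)).mapMatrix (A ^ _) = 1
  rw [map_pow]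
  exact pow_orderOf_eq_one _

lemma exists_iterate_phiA_eq_self {k : Type*} [Field k] {n N : ℕ} [NeZero N]
    (A : Matrix (Fin n) (Fin n) ℤ) (hA : N.Coprime A.det.natAbs)
    {u : Fin n → kˣ} (hu : ∀ j, u j ^ N = 1) :
    ∃ m, 1 ≤ m ∧ (phiA A)^[m] u = u := by
  obtain ⟨m, hm, hAm⟩ := A.exists_pow_map_intCast_eq_one hA
  refine ⟨m, hm, ?_⟩
  rw [iterate_phiA, phiA_eq_of_map_intCast_eq hu (B := 1), phiA_one]
  simp [hAm]

lemma Matrix.IsPositiveZMatrix.det_ne_zero {n : ℕ} {A : Matrix (Fin n) (Fin n) ℤ}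
    (hA : A.IsPositiveZMatrix) : A.det ≠ 0 := by
  intro hdet
  refine (hA 0 ?_).1 rfl
  have hdetC : (A.map ((↑) : ℤ → ℂ)).det = 0 := by
    rw [← Int.cast_det, hdet, Int.cast_zero]
  rw [Polynomial.IsRoot, ← Polynomial.coeff_zero_eq_eval_zero]
  simpa [hdetC] using (det_eq_sign_charpoly_coeff (A.map ((↑) : ℤ → ℂ))).symm

lemma infinite_setOf_pow_eq_one_of_coprime (k : Type*) [Field k] [IsAlgClosed k] [CharZero k]
    {d : ℕ} (hd : d ≠ 0) : {x : k | ∃ N, 0 < N ∧ N.Coprime d ∧ x ^ N = 1}.Infinite := by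
  have hζ (t : ℕ) : ∃ ζ : k, IsPrimitiveRoot ζ (d * t + 1) :=
    HasEnoughRootsOfUnity.exists_primitiveRoot k _
  choose ζ hζ using hζ
  refine Set.infinite_of_injective_forall_mem (f := ζ) (fun s t hst => ?_) fun t =>
    ⟨d * t + 1, Nat.succ_pos _, (Nat.coprime_mul_left_add_left 1 d t).mpr (Nat.coprime_one_left d),
      (hζ t).pow_eq_one⟩
  have horder : d * s + 1 = d * t + 1 := (hζ s).unique (hst ▸ hζ t)
  exact Nat.eq_of_mul_eq_mul_left (Nat.pos_of_ne_zero hd) (by omega)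

theorem periodic_points_of_positive_matrix_dense_general
    (k : Type*) [Field k] [IsAlgClosed k] [CharZero k]
    (n : ℕ)
    (A : Matrix (Fin n) (Fin n) ℤ) (hA : A.IsPositiveZMatrix) :
    ∀ p : MvPolynomial (Fin n) k,
      (∀ u : Fin n → kˣ, (∃ m : ℕ, 1 ≤ m ∧ (phiA A)^[m] u = u) →
        MvPolynomial.eval (fun i => (u i : k)) p = 0) → p = 0 := by
  intro p hp
  have hd : A.det.natAbs ≠ 0 := Int.natAbs_ne_zero.mpr hA.det_ne_zero
  refine MvPolynomial.funext_set _ (fun _ => infinite_setOf_pow_eq_one_of_coprime k hd)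
    fun x hx => ?_
  choose N hN hcop hxN using Set.mem_univ_pi.mp hx
  set u : Fin n → kˣ := fun i => Units.ofPowEqOne (x i) (N i) (hxN i) (hN i).ne'
  have : NeZero (∏ i, N i) := ⟨Finset.prod_ne_zero_iff.mpr fun i _ => (hN i).ne'⟩
  have hu : ∀ j, u j ^ ∏ i, N i = 1 := fun j => by
    obtain ⟨c, hc⟩ := Finset.dvd_prod_of_mem N (Finset.mem_univ j)
    rw [hc, pow_mul, Units.pow_ofPowEqOne, one_pow]
  have hper := exists_iterate_phiA_eq_self A (Nat.Coprime.prod_left fun i _ => hcop i) hu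
  simpa [u] using hp u hper

/-- For a positive integer matrix `A`, the set of `φ_A`-periodic points of `𝔾_m^n` over an
algebraically closed field `k` of characteristic zero is Zariski dense: no nonzero
(Laurent) polynomial vanishes on all `φ_A`-periodic points. -/
theorem periodic_points_of_positive_matrix_dense
    (k : Type*) [Field k] [IsAlgClosed k] [CharZero k]
    (n : ℕ) (hn : 1 ≤ n)
    (A : Matrix (Fin n) (Fin n) ℤ) (hA : A.IsPositiveZMatrix) :
    ∀ p : MvPolynomial (Fin n) k,
      (∀ u : Fin n → kˣ, (∃ m : ℕ, 1 ≤ m ∧ (phiA A)^[m] u = u) →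
        MvPolynomial.eval (fun i => (u i : k)) p = 0) → p = 0 :=
  periodic_points_of_positive_matrix_dense_general k n A hA
end
end

section
/- Let L be an algebraically closed field equipped with a non-archimedean absolute value |·|, and let f = (f_1,…,f_N) : L^N → L^N be a polynomial map such that every f_j has total degree d ≥ 2 and the homogeneous part f_h = (f_1^+,…,f_N^+) (where f_j^+ is the sum of the degree-d monomials of f_j) satisfies f_h^{-1}(0) = {0} in L^N. Then there exists a constant A ≥ 1 such that for every z ∈ L^N with |z| > A one has |f(z)| > |z|, where |z| := max_{1≤i≤N} |z_i|. In particular, every f-preperiodic point z ∈ L^N satisfies |z| ≤ A. -/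
/-!
By the Nullstellensatz each `X i ^ m i` lies in the ideal generated by the leading forms
`f_j^+`, say `X i ^ m i = ∑ j, c i j * f_j^+`. Evaluating this identity at `z / z i`, where
`|z i| = |z|` is the largest coordinate, gives `|z| ^ d ≤ C * max_j |f_j^+ z|`, while the
lower-degree part contributes at most `H * |z| ^ (d - 1)`. Hence
`|f z| ≥ |z| ^ (d - 1) * (|z| / C - H) > |z|` as soon as `|z| > C * (1 + H)`; along the orbit of
such a point `|·|` then increases strictly, so it cannot be preperiodic.
-/

noncomputable section

/-- The self-map of `L^N` induced by an `N`-tuple of polynomials. -/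
def evalMapL {L : Type*} [CommRing L] {N : ℕ} (f : Fin N → MvPolynomial (Fin N) L)
    (z : Fin N → L) : Fin N → L :=
  fun i => MvPolynomial.eval z (f i)

/-- `z` is preperiodic under `F`. -/
def IsPreperiodicPt {X : Type*} (F : X → X) (z : X) : Prop :=
  ∃ n m : ℕ, 0 < m ∧ F^[n + m] z = F^[n] z

namespace MvPolynomial

variable {R σ : Type*}

def abvCoeffSum [CommSemiring R] (v : AbsoluteValue R ℝ) (P : MvPolynomial σ R) : ℝ :=
  ∑ s ∈ P.support, v (P.coeff s)

theorem abvCoeffSum_nonneg [CommSemiring R] (v : AbsoluteValue R ℝ) (P : MvPolynomial σ R) :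
    0 ≤ abvCoeffSum v P :=
  Finset.sum_nonneg fun _ _ => v.nonneg _

theorem abv_eval_le_abvCoeffSum_mul_pow [CommSemiring R] [Nontrivial R] [Fintype σ]
    (v : AbsoluteValue R ℝ) {P : MvPolynomial σ R} {e : ℕ} (hP : P.totalDegree ≤ e)
    {z : σ → R} {M : ℝ} (hM : 1 ≤ M) (hz : ∀ i, v (z i) ≤ M) :
    v (eval z P) ≤ abvCoeffSum v P * M ^ e := by
  rw [eval_eq', abvCoeffSum, Finset.sum_mul]
  refine (v.sum_le _ _).trans (Finset.sum_le_sum fun s hs => ?_)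
  rw [v.map_mul]
  gcongr
  calc v (∏ i, z i ^ s i) = ∏ i, v (z i) ^ s i := by simp only [map_prod, map_pow]
    _ ≤ ∏ i, M ^ s i := by gcongr with i; exact hz i
    _ = M ^ s.degree := by rw [Finset.prod_pow_eq_pow_sum, Finsupp.degree_eq_sum]
    _ ≤ M ^ e := pow_le_pow_right₀ hM ((le_totalDegree hs).trans hP)

theorem IsHomogeneous.eval_smul [CommSemiring R] [Fintype σ] {P : MvPolynomial σ R} {n : ℕ}
    (hP : P.IsHomogeneous n) (t : R) (z : σ → R) :
    eval (t • z) P = t ^ n * eval z P := by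
  rw [eval_eq', eval_eq', Finset.mul_sum]
  refine Finset.sum_congr rfl fun s hs => ?_
  have hdeg : ∑ i, s i = n := by
    rw [← Finsupp.degree_eq_sum, Finsupp.degree_eq_weight_one]
    exact hP (mem_support_iff.mp hs)
  simp only [Pi.smul_apply, smul_eq_mul, mul_pow, Finset.prod_mul_distrib,
    Finset.prod_pow_eq_pow_sum, hdeg]
  ring

theorem totalDegree_sub_homogeneousComponent_le [CommRing R] {P : MvPolynomial σ R} {n : ℕ}
    (hP : P.totalDegree ≤ n) : (P - homogeneousComponent n P).totalDegree ≤ n - 1 := by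
  refine Finset.sup_le fun s hs => ?_
  have hs' := mem_support_iff.mp hs
  rw [coeff_sub, coeff_homogeneousComponent] at hs'
  have hne : s.degree ≠ n := fun h => hs' (by simp [h])
  rw [if_neg hne, sub_zero] at hs'
  have hle : s.degree ≤ n := (le_totalDegree (mem_support_iff.mpr hs')).trans hP
  change s.degree ≤ n - 1
  omega

theorem abv_eval_homogeneousComponent_sub_le [CommRing R] [Nontrivial R] [Fintype σ]
    (v : AbsoluteValue R ℝ) {P : MvPolynomial σ R} {d : ℕ}
    (hP : P.totalDegree ≤ d) {z : σ → R} {S : ℝ} (hS : 1 ≤ S) (hz : ∀ k, v (z k) ≤ S) :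
    v (eval z (homogeneousComponent d P)) - abvCoeffSum v (P - homogeneousComponent d P) *
      S ^ (d - 1) ≤ v (eval z P) := by
  have hrest := abv_eval_le_abvCoeffSum_mul_pow v
    (totalDegree_sub_homogeneousComponent_le hP) hS hz
  have := v.le_add (eval z (homogeneousComponent d P)) (eval z (P - homogeneousComponent d P))
  rw [map_sub, add_sub_cancel] at this
  rw [map_sub] at hrest
  linarith

theorem exists_sum_mul_eq_X_pow_of_eval_eq_zero [Field R] [IsAlgClosed R] [Finite σ]
    {ι : Type*} [Fintype ι] (g : ι → MvPolynomial σ R)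
    (hg : ∀ z : σ → R, (∀ j, eval z (g j) = 0) → z = 0) (i : σ) :
    ∃ (m : ℕ) (c : ι → MvPolynomial σ R), ∑ j, c j * g j = X i ^ m := by
  have hX : X i ∈ (Ideal.span (Set.range g)).radical := by
    rw [← vanishingIdeal_zeroLocus_eq_radical (K := R), mem_vanishingIdeal_iff]
    intro x hx
    rw [hg x fun j => hx (g j) (Ideal.subset_span ⟨j, rfl⟩), aeval_X]
    rfl
  obtain ⟨m, hm⟩ := Ideal.mem_radical_iff.mp hX
  exact ⟨m, Ideal.mem_span_range_iff_exists_fun.mp hm⟩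

section Field

variable {K σ ι : Type*} [Field K] [Fintype σ] [Fintype ι] (v : AbsoluteValue K ℝ)

theorem exists_pow_le_mul_abv_eval {d m : ℕ} {g c : ι → MvPolynomial σ K}
    (hg : ∀ j, (g j).IsHomogeneous d) {i : σ} (hc : ∑ j, c j * g j = X i ^ m)
    {z : σ → K} (hzi : z i ≠ 0) (hz : ∀ k, v (z k) ≤ v (z i)) :
    ∃ j, v (z i) ^ d ≤ (∑ k, abvCoeffSum v (c k)) * v (eval z (g j)) := by
  -- Rescale `z` so that its largest coordinate is `1`; homogeneity pulls out `v (z i) ^ d`.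
  set w := (z i)⁻¹ • z
  have hw : ∀ k, v (w k) ≤ 1 := fun k => by
    simp only [w, Pi.smul_apply, smul_eq_mul, map_mul, map_inv₀]
    exact inv_mul_le_one_of_le₀ (hz k) (v.nonneg _)
  have hone : ∑ j, eval w (c j) * eval w (g j) = 1 := by
    simpa [w, hzi] using congrArg (eval w) hc
  have hsum : v (z i) ^ d ≤ ∑ k, abvCoeffSum v (c k) * v (eval z (g k)) := calc
    v (z i) ^ d = v (z i) ^ d * v (∑ j, eval w (c j) * eval w (g j)) := by
        rw [hone, map_one, mul_one]
    _ ≤ v (z i) ^ d * ∑ k, abvCoeffSum v (c k) * v (eval w (g k)) := by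
        gcongr
        refine (v.sum_le _ _).trans (Finset.sum_le_sum fun k _ => ?_)
        rw [map_mul]
        gcongr
        simpa using abv_eval_le_abvCoeffSum_mul_pow v le_rfl le_rfl hw
    _ = ∑ k, abvCoeffSum v (c k) * v (eval z (g k)) := by
        rw [Finset.mul_sum]
        refine Finset.sum_congr rfl fun k _ => ?_
        have hzw : eval z (g k) = z i ^ d * eval w (g k) := by
          rw [← (hg k).eval_smul, smul_inv_smul₀ hzi]
        rw [hzw, map_mul, map_pow]
        ring
  obtain ⟨j, hj⟩ : ∃ j, ∀ k, v (eval z (g k)) ≤ v (eval z (g j)) := by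
    cases isEmpty_or_nonempty ι
    · have := v.pos hzi
      simp only [Finset.univ_eq_empty, Finset.sum_empty] at hsum
      exact absurd hsum (not_le.mpr (by positivity))
    · exact Finite.exists_max _
  refine ⟨j, hsum.trans ?_⟩
  rw [Finset.sum_mul]
  exact Finset.sum_le_sum fun k _ => mul_le_mul_of_nonneg_left (hj k) (abvCoeffSum_nonneg v _)

def escapeRadius (d : ℕ) (f : ι → MvPolynomial σ K) (c : σ → ι → MvPolynomial σ K) : ℝ :=
  (1 + ∑ i, ∑ j, abvCoeffSum v (c i j)) *
    (1 + ∑ j, abvCoeffSum v (f j - homogeneousComponent d (f j)))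

theorem one_le_escapeRadius (d : ℕ) (f : ι → MvPolynomial σ K)
    (c : σ → ι → MvPolynomial σ K) : 1 ≤ escapeRadius v d f c := by
  unfold escapeRadius
  refine one_le_mul_of_one_le_of_one_le ?_ ?_ <;>
    refine le_add_of_nonneg_right (Finset.sum_nonneg fun _ _ => ?_)
  · exact Finset.sum_nonneg fun _ _ => abvCoeffSum_nonneg v _
  · exact abvCoeffSum_nonneg v _

theorem iSup_abv_lt_iSup_abv_eval_of_escapeRadius_lt {d : ℕ} (hd : 2 ≤ d)
    {f : ι → MvPolynomial σ K} (hf : ∀ j, (f j).totalDegree ≤ d)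
    {c : σ → ι → MvPolynomial σ K} {m : σ → ℕ}
    (hc : ∀ i, ∑ j, c i j * homogeneousComponent d (f j) = X i ^ m i)
    {z : σ → K} (hz : escapeRadius v d f c < ⨆ i, v (z i)) :
    (⨆ i, v (z i)) < ⨆ j, v (eval z (f j)) := by
  have hA := one_le_escapeRadius v d f c
  cases isEmpty_or_nonempty σ
  · rw [Real.iSup_of_isEmpty] at hz
    linarith
  obtain ⟨i, hi⟩ := exists_eq_ciSup_of_finite (f := fun i => v (z i))
  rw [← hi] at hz ⊢
  set S := v (z i)
  set C := 1 + ∑ i, ∑ j, abvCoeffSum v (c i j)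
  set H := ∑ j, abvCoeffSum v (f j - homogeneousComponent d (f j))
  have hS : 1 ≤ S := hA.trans hz.le
  have hzi : z i ≠ 0 := fun h => by norm_num [S, h] at hS
  have hmax : ∀ k, v (z k) ≤ S := fun k =>
    (le_ciSup (Finite.bddAbove_range fun i => v (z i)) k).trans_eq hi.symm
  obtain ⟨j, hj⟩ := exists_pow_le_mul_abv_eval v
    (fun j => homogeneousComponent_isHomogeneous d (f j)) (hc i) hzi hmax
  set G := v (eval z (homogeneousComponent d (f j)))
  have hCG : S ^ d ≤ C * G := by
    refine hj.trans (mul_le_mul_of_nonneg_right ?_ (v.nonneg _))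
    have := Finset.single_le_sum (f := fun i => ∑ k, abvCoeffSum v (c i k))
      (fun i _ => Finset.sum_nonneg fun k _ => abvCoeffSum_nonneg v (c i k)) (Finset.mem_univ i)
    linarith
  have hG : G - H * S ^ (d - 1) ≤ v (eval z (f j)) := by
    have hH := Finset.single_le_sum
      (f := fun j => abvCoeffSum v (f j - homogeneousComponent d (f j)))
      (fun j _ => abvCoeffSum_nonneg v _) (Finset.mem_univ j)
    have := abv_eval_homogeneousComponent_sub_le v (hf j) hS hmax
    have := mul_le_mul_of_nonneg_right hH (pow_nonneg (zero_le_one.trans hS) (d - 1))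
    linarith
  -- `C * v (f_j z) ≥ S ^ d - C H S ^ (d-1) = S ^ (d-1) (S - C H) > C S ^ (d-1) ≥ C S`.
  have hP : S ≤ S ^ (d - 1) := le_self_pow₀ hS (by omega)
  have hSd : S ^ d = S ^ (d - 1) * S := by rw [← pow_succ]; congr 1; omega
  have hC : 0 < C := add_pos_of_pos_of_nonneg one_pos
    (Finset.sum_nonneg fun i _ => Finset.sum_nonneg fun j _ => abvCoeffSum_nonneg v (c i j))
  have hz' : C * (1 + H) < S := hz
  have hlt : C * S < C * v (eval z (f j)) := by
    nlinarith [mul_le_mul_of_nonneg_left hG hC.le, mul_lt_mul_of_pos_left hz'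
      (zero_lt_one.trans_le (hS.trans hP)), mul_le_mul_of_nonneg_left hP hC.le]
  exact (lt_of_mul_lt_mul_left hlt hC.le).trans_le
    (le_ciSup (Finite.bddAbove_range fun j => v (eval z (f j))) j)

end Field

end MvPolynomial

theorem IsPreperiodicPt.le_of_forall_lt_apply {X : Type*} {F : X → X} {z : X}
    (φ : X → ℝ) {A : ℝ} (hF : ∀ x, A < φ x → φ x < φ (F x)) (hz : IsPreperiodicPt F z) :
    φ z ≤ A := by
  obtain ⟨n, m, hm, hnm⟩ := hz
  by_contra! hA
  have hgt : ∀ k, A < φ (F^[k] z) := by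
    intro k
    induction k with
    | zero => exact hA
    | succ k ih => rw [Function.iterate_succ_apply']; exact ih.trans (hF _ ih)
  have hmono : StrictMono fun k => φ (F^[k] z) := strictMono_nat_of_lt_succ fun k => by
    simpa only [Function.iterate_succ_apply'] using hF _ (hgt k)
  simpa only [hnm, lt_self_iff_false] using hmono (Nat.lt_add_of_pos_right hm : n < n + m)

theorem nonarchimedean_escape_bound_general
    (L : Type*) [Field L] [IsAlgClosed L]
    (v : AbsoluteValue L ℝ)
    (N : ℕ) (f : Fin N → MvPolynomial (Fin N) L)
    (d : ℕ) (hd : 2 ≤ d)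
    (hdeg : ∀ j, (f j).totalDegree = d)
    (hreg : ∀ z : Fin N → L,
      (∀ j, MvPolynomial.eval z (MvPolynomial.homogeneousComponent d (f j)) = 0) → z = 0) :
    ∃ A : ℝ, 1 ≤ A ∧
      (∀ z : Fin N → L, A < (⨆ i, v (z i)) →
        (⨆ i, v (z i)) < ⨆ i, v (evalMapL f z i)) ∧
      (∀ z : Fin N → L, IsPreperiodicPt (evalMapL f) z → (⨆ i, v (z i)) ≤ A) := by
  choose m c hc using MvPolynomial.exists_sum_mul_eq_X_pow_of_eval_eq_zero _ hreg
  have hescape : ∀ z : Fin N → L, MvPolynomial.escapeRadius v d f c < (⨆ i, v (z i)) →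
      (⨆ i, v (z i)) < ⨆ i, v (evalMapL f z i) := fun _ =>
    MvPolynomial.iSup_abv_lt_iSup_abv_eval_of_escapeRadius_lt v hd (fun j => (hdeg j).le) hc
  exact ⟨MvPolynomial.escapeRadius v d f c, MvPolynomial.one_le_escapeRadius v d f c, hescape,
    fun z hz => hz.le_of_forall_lt_apply (fun z => ⨆ i, v (z i)) hescape⟩

/-- Escape bound for a regular polynomial endomorphism over a non-archimedean field:
there is `A ≥ 1` such that `|f(z)| > |z|` whenever `|z| > A` (with
`|z| = max_i |z_i|`); in particular every preperiodic point `z` satisfies `|z| ≤ A`. -/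
theorem nonarchimedean_escape_bound
    (L : Type*) [Field L] [IsAlgClosed L]
    (v : AbsoluteValue L ℝ) (hv : ∀ x y : L, v (x + y) ≤ max (v x) (v y))
    (N : ℕ) (f : Fin N → MvPolynomial (Fin N) L)
    (d : ℕ) (hd : 2 ≤ d)
    (hdeg : ∀ j, (f j).totalDegree = d)
    (hreg : ∀ z : Fin N → L,
      (∀ j, MvPolynomial.eval z (MvPolynomial.homogeneousComponent d (f j)) = 0) → z = 0) :
    ∃ A : ℝ, 1 ≤ A ∧
      (∀ z : Fin N → L, A < (⨆ i, v (z i)) →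
        (⨆ i, v (z i)) < ⨆ i, v (evalMapL f z i)) ∧
      (∀ z : Fin N → L, IsPreperiodicPt (evalMapL f) z → (⨆ i, v (z i)) ≤ A) :=
  nonarchimedean_escape_bound_general L v N f d hd hdeg hreg
end
end
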